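/- Indicator of the derivative of the spherical Bessel function (Lemma 3.7, second part): for every R₀ > 0, every l ∈ ℕ and every θ ∈ [0, 2π], the indicator function of the entire function k ↦ j_l'(k·R₀) equals R₀·|sin θ|, i.e. limsup_{r→∞} log|j_l'(R₀·r·e^{iθ})| / r = R₀·|sin θ|. -/

import Mathlib

open scoped Real

/-- The entire extension of `z ↦ sin z / z` (value `1` at `z = 0`). -/
noncomputable def csinc (z : ℂ) : ℂ := if z = 0 then 1 else Complex.sin z / z

/-- The spherical Bessel function of the first kind of order `l`, via Rayleigh's formula
`j_l(z) = (−z)^l ((1/z)·d/dz)^l (sin z / z)`. -/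
noncomputable def sphBessel (l : ℕ) (z : ℂ) : ℂ :=
  (-z) ^ l * ((fun f : ℂ → ℂ => fun w => (1 / w) * deriv f w)^[l] csinc) z

/-- The (Lindelöf) indicator function of order 1 of `f : ℂ → ℂ`, valued in `[−∞,+∞]`. -/
noncomputable def indic (f : ℂ → ℂ) (θ : ℝ) : EReal :=
  Filter.limsup
    (fun r : ℝ => ((Real.log ‖f (r * Complex.exp (θ * Complex.I))‖ / r : ℝ) : EReal))
    Filter.atTop

open Polynomial Complex Filter Topology

/-!
Away from `0`, `sin z / z`, everything Rayleigh's formula builds from it, and the derivative of the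
result all have the shape `(e^{iz} A(z) + e^{-iz} B(z)) / z^k` with polynomials `A`, `B` of one
common degree `d`: differentiating multiplies the leading coefficients by `±i`, so they never
vanish. Along a ray `r w` with `Im w > 0` the term `e^{-iz} B(z)` dominates and
`log |f(r w)| / r → Im w`. On the positive real axis both exponentials have modulus one, so
polynomial growth gives `limsup ≤ 0`; along `r = (x₀ + nπ) / w` the factor `e^{2irw} = e^{2ix₀}` is
constant, and for `x₀ ∈ {0, π/2}` suitably chosen the leading terms do not cancel, so `f` has exact
polynomial size there and the `limsup` is `≥ 0`. The symmetry `z ↦ -z`, which preserves the shape,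
covers the remaining directions.
-/

noncomputable def expPoly (A B : ℂ[X]) (z : ℂ) : ℂ :=
  cexp (I * z) * A.eval z + cexp (-I * z) * B.eval z

def ExpPolyForm (f : ℂ → ℂ) (k d : ℕ) : Prop :=
  ∃ A B : ℂ[X], A.degree = d ∧ B.degree = d ∧ ∀ z ≠ 0, f z = expPoly A B z / z ^ k

noncomputable def expDivPowDeriv (c : ℂ) (k : ℕ) (p : ℂ[X]) : ℂ[X] :=
  X * (C c * p + derivative p) - C (k : ℂ) * p

lemma hasDerivAt_exp_mul_eval_div_pow (c : ℂ) (k : ℕ) (p : ℂ[X]) {z : ℂ} (hz : z ≠ 0) :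
    HasDerivAt (fun w => cexp (c * w) * p.eval w / w ^ k)
      (cexp (c * z) * (expDivPowDeriv c k p).eval z / z ^ (k + 1)) z := by
  have hexp : HasDerivAt (fun w => cexp (c * w)) (cexp (c * z) * c) z := by
    simpa using ((hasDerivAt_id z).const_mul c).cexp
  refine ((hexp.fun_mul (p.hasDerivAt z)).fun_div (hasDerivAt_pow k z)
    (pow_ne_zero k hz)).congr_deriv ?_
  simp only [expDivPowDeriv, eval_sub, eval_mul, eval_add, eval_X, eval_C]
  rcases k with _ | k <;> field_simp <;> push_cast <;> ring

lemma degree_expDivPowDeriv {c : ℂ} (hc : c ≠ 0) (k : ℕ) {p : ℂ[X]} {d : ℕ} (hp : p.degree = d) :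
    (expDivPowDeriv c k p).degree = ↑(d + 1) := by
  have hcoeff : (expDivPowDeriv c k p).coeff (d + 1) = c * p.coeff d := by
    simp [expDivPowDeriv, coeff_derivative, coeff_eq_zero_of_degree_lt (p := p) (n := d + 1)
      (by rw [hp]; exact_mod_cast d.lt_succ_self)]
  refine degree_eq_of_le_of_coeff_ne_zero ?_
    (by rw [hcoeff]; exact mul_ne_zero hc (coeff_ne_zero_of_eq_degree hp))
  have hp' : p.natDegree = d := natDegree_eq_of_degree_eq_some hp
  have hsum : (C c * p + derivative p).natDegree ≤ d :=
    (natDegree_add_le _ _).trans <| max_le ((natDegree_C_mul_le _ _).trans hp'.le)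
      ((natDegree_derivative_le p).trans (by omega))
  refine degree_le_of_natDegree_le <| (natDegree_sub_le _ _).trans <| max_le ?_ ?_
  · exact natDegree_mul_le.trans (by rw [natDegree_X]; omega)
  · exact (natDegree_C_mul_le _ _).trans (by omega)

namespace ExpPolyForm

variable {f : ℂ → ℂ} {k d : ℕ}

lemma deriv (hf : ExpPolyForm f k d) : ExpPolyForm (deriv f) (k + 1) (d + 1) := by
  obtain ⟨A, B, hA, hB, hfAB⟩ := hf
  refine ⟨expDivPowDeriv I k A, expDivPowDeriv (-I) k B, degree_expDivPowDeriv I_ne_zero k hA,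
    degree_expDivPowDeriv (neg_ne_zero.2 I_ne_zero) k hB, fun z hz => ?_⟩
  have hloc : f =ᶠ[𝓝 z]
      fun w => cexp (I * w) * A.eval w / w ^ k + cexp (-I * w) * B.eval w / w ^ k := by
    filter_upwards [isOpen_ne.mem_nhds hz] with w hw
    rw [hfAB w hw, expPoly, add_div]
  rw [hloc.deriv_eq, ((hasDerivAt_exp_mul_eval_div_pow I k A hz).fun_add
    (hasDerivAt_exp_mul_eval_div_pow (-I) k B hz)).deriv, expPoly, add_div]

lemma one_div_mul (hf : ExpPolyForm f k d) : ExpPolyForm (fun z => 1 / z * f z) (k + 1) d := by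
  obtain ⟨A, B, hA, hB, hfAB⟩ := hf
  refine ⟨A, B, hA, hB, fun z hz => ?_⟩
  dsimp only
  rw [hfAB z hz, pow_succ]
  field_simp

lemma neg_pow_mul {l : ℕ} (hf : ExpPolyForm f (k + l) d) :
    ExpPolyForm (fun z => (-z) ^ l * f z) k d := by
  obtain ⟨A, B, hA, hB, hfAB⟩ := hf
  have hsign : ((-1) ^ l : ℂ) ≠ 0 := pow_ne_zero _ (by norm_num)
  refine ⟨C ((-1) ^ l) * A, C ((-1) ^ l) * B, by rwa [degree_C_mul hsign],
    by rwa [degree_C_mul hsign], fun z hz => ?_⟩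
  dsimp only
  rw [hfAB z hz, expPoly, expPoly, neg_pow, pow_add]
  simp only [eval_mul, eval_C]
  field_simp

lemma comp_neg (hf : ExpPolyForm f k d) : ExpPolyForm (fun z => f (-z)) k d := by
  obtain ⟨A, B, hA, hB, hfAB⟩ := hf
  have hsign : ((-1) ^ k : ℂ) ≠ 0 := pow_ne_zero _ (by norm_num)
  refine ⟨C ((-1) ^ k) * B.comp (-X), C ((-1) ^ k) * A.comp (-X),
    by rwa [degree_C_mul hsign, degree_comp_neg_X], by rwa [degree_C_mul hsign, degree_comp_neg_X],
    fun z hz => ?_⟩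
  dsimp only
  rw [hfAB (-z) (neg_ne_zero.2 hz), expPoly, expPoly, neg_pow]
  simp only [eval_mul, eval_C, eval_comp, eval_neg, eval_X, mul_neg, neg_mul, neg_neg]
  field_simp
  rw [← pow_mul, pow_mul', neg_one_sq, one_pow]
  ring

end ExpPolyForm

lemma expPolyForm_csinc : ExpPolyForm csinc 1 0 := by
  refine ⟨C (-I / 2), C (I / 2), degree_C (by simp), degree_C (by simp), fun z hz => ?_⟩
  rw [csinc, if_neg hz, Complex.sin, expPoly, eval_C, eval_C, pow_one]
  ring_nf

lemma expPolyForm_rayleigh_iterate (l : ℕ) :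
    ExpPolyForm ((fun f : ℂ → ℂ => fun w => (1 / w) * deriv f w)^[l] csinc) (2 * l + 1) l := by
  induction l with
  | zero => exact expPolyForm_csinc
  | succ l ih =>
    rw [Function.iterate_succ_apply']
    exact ih.deriv.one_div_mul

lemma expPolyForm_sphBessel (l : ℕ) : ExpPolyForm (sphBessel l) (l + 1) l := by
  have h := expPolyForm_rayleigh_iterate l
  rw [show 2 * l + 1 = l + 1 + l by ring] at h
  exact h.neg_pow_mul

lemma Polynomial.tendsto_eval_div_pow_cobounded {𝕜 : Type*} [NormedField 𝕜] {p : 𝕜[X]} {N : ℕ}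
    (hN : p.natDegree ≤ N) :
    Tendsto (fun z => p.eval z / z ^ N) (Bornology.cobounded 𝕜) (𝓝 (p.coeff N)) := by
  have hrefl : Tendsto (fun z : 𝕜 => (reflect N p).eval z⁻¹) (Bornology.cobounded 𝕜)
      (𝓝 ((reflect N p).eval 0)) :=
    ((reflect N p).continuous.tendsto 0).comp tendsto_inv₀_cobounded
  rw [← coeff_zero_eq_eval_zero, coeff_reflect, revAt_zero] at hrefl
  refine hrefl.congr' ?_
  filter_upwards [Bornology.eventually_ne_cobounded 0] with z hz
  let := invertibleOfNonzero hz
  rw [eq_div_iff (pow_ne_zero N hz), ← invOf_eq_inv, ← eval₂_id, ← eval₂_id,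
    eval₂_reflect_mul_pow _ _ _ _ hN]

lemma tendsto_div_of_tendsto_sub_mul_add_mul_log {φ : ℝ → ℝ} {l : Filter ℝ} (hl : l ≤ atTop)
    {s m ℓ : ℝ} (h : Tendsto (fun r => φ r - s * r + m * Real.log r) l (𝓝 ℓ)) :
    Tendsto (fun r => φ r / r) l (𝓝 s) := by
  have hid : Tendsto (fun r : ℝ => r) l atTop := tendsto_id.mono_left hl
  have hlog : Tendsto (fun r => Real.log r / r) l (𝓝 0) :=
    Real.isLittleO_log_id_atTop.tendsto_div_nhds_zero.mono_left hl
  have hlim := ((h.div_atTop hid).sub (hlog.const_mul m)).const_add s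
  rw [mul_zero, sub_zero, add_zero] at hlim
  refine hlim.congr' ?_
  filter_upwards [hid.eventually_ne_atTop 0] with r hr
  field_simp
  ring

lemma norm_expPoly_le (A B : ℂ[X]) (z : ℂ) :
    ‖expPoly A B z‖ ≤ Real.exp |z.im| * (‖A.eval z‖ + ‖B.eval z‖) := by
  refine (norm_add_le _ _).trans ?_
  rw [norm_mul, norm_mul, Complex.norm_exp, Complex.norm_exp, mul_add]
  gcongr <;> simp [neg_le_abs, le_abs_self]

lemma tendsto_ofReal_mul_cobounded {w : ℂ} (hw : w ≠ 0) :
    Tendsto (fun r : ℝ => (r : ℂ) * w) atTop (Bornology.cobounded ℂ) := by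
  rw [← tendsto_norm_atTop_iff_cobounded]
  simp_rw [norm_mul, Complex.norm_real, Real.norm_eq_abs]
  exact tendsto_abs_atTop_atTop.atTop_mul_const (norm_pos_iff.2 hw)

lemma exp_mul_expPoly (A B : ℂ[X]) (z : ℂ) :
    cexp (I * z) * expPoly A B z = cexp (2 * I * z) * A.eval z + B.eval z := by
  rw [expPoly, mul_add, ← mul_assoc, ← mul_assoc, ← Complex.exp_add, ← Complex.exp_add]
  ring_nf
  rw [Complex.exp_zero, one_mul]

lemma tendsto_log_norm_div_of_tendsto_exp {f : ℂ → ℂ} {A B : ℂ[X]} {k d : ℕ}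
    (hf : ∀ z ≠ 0, f z = expPoly A B z / z ^ k) (hA : A.natDegree ≤ d) (hB : B.natDegree ≤ d)
    {l : Filter ℝ} (hl : l ≤ atTop) {w u : ℂ} (hw : w ≠ 0)
    (hu : Tendsto (fun r : ℝ => cexp (2 * I * (r * w))) l (𝓝 u))
    (hL : u * A.coeff d + B.coeff d ≠ 0) :
    Tendsto (fun r : ℝ => Real.log ‖f (r * w)‖ / r) l (𝓝 w.im) := by
  have hray := (tendsto_ofReal_mul_cobounded hw).mono_left hl
  set g : ℝ → ℂ := fun r => cexp (2 * I * (r * w)) * (A.eval (r * w) / (r * w) ^ d)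
    + B.eval (r * w) / (r * w) ^ d
  have hg : Tendsto g l (𝓝 (u * A.coeff d + B.coeff d)) :=
    (hu.mul ((tendsto_eval_div_pow_cobounded hA).comp hray)).add
      ((tendsto_eval_div_pow_cobounded hB).comp hray)
  have hlog : Tendsto (fun r => Real.log ‖g r‖) l (𝓝 (Real.log ‖u * A.coeff d + B.coeff d‖)) :=
    (Real.continuousAt_log (norm_ne_zero_iff.2 hL)).tendsto.comp hg.norm
  refine tendsto_div_of_tendsto_sub_mul_add_mul_log hl (m := k - d) ((hlog.sub_const
    ((k - d : ℝ) * Real.log ‖w‖)).congr' ?_)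
  filter_upwards [hl (eventually_gt_atTop 0), hg.eventually_ne hL] with r hr hgr
  have hz : (r : ℂ) * w ≠ 0 := mul_ne_zero (by exact_mod_cast hr.ne') hw
  have hg_eq : g r = cexp (I * (r * w)) * f (r * w) * (r * w) ^ k / (r * w) ^ d := by
    rw [hf _ hz, mul_div_assoc', div_mul_cancel₀ _ (pow_ne_zero k hz), exp_mul_expPoly]
    simp only [g]
    ring
  have hfr : f (r * w) ≠ 0 := by
    rintro h
    simp [hg_eq, h] at hgr
  have hnorm : ‖g r‖ = Real.exp (-(w.im * r)) * ‖f (r * w)‖ * (r * ‖w‖) ^ k / (r * ‖w‖) ^ d := by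
    rw [hg_eq, norm_div, norm_mul, norm_mul, Complex.norm_exp, norm_pow, norm_pow, norm_mul,
      Complex.norm_real, Real.norm_of_nonneg hr.le]
    congr 4
    simp only [mul_re, I_re, I_im, ofReal_re, ofReal_im, mul_im]
    ring
  have hw' : 0 < ‖w‖ := norm_pos_iff.2 hw
  rw [hnorm, Real.log_div (by positivity) (by positivity), Real.log_mul (by positivity)
    (by positivity), Real.log_mul (by positivity) (by positivity), Real.log_exp, Real.log_pow,
    Real.log_pow, Real.log_mul hr.ne' hw'.ne']
  ring

lemma exists_eventually_norm_le_exp_mul_pow {f : ℂ → ℂ} {A B : ℂ[X]} {k d : ℕ}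
    (hf : ∀ z ≠ 0, f z = expPoly A B z / z ^ k) (hA : A.natDegree ≤ d) (hB : B.natDegree ≤ d)
    {w : ℂ} (hw : w ≠ 0) :
    ∃ M ≥ 1, ∀ᶠ r : ℝ in atTop, ‖f (r * w)‖ ≤ Real.exp (|w.im| * r) * (M * (r * ‖w‖) ^ d) := by
  have hpoly {p : ℂ[X]} (hp : p.natDegree ≤ d) :
      (fun z => ‖p.eval z‖) =O[Bornology.cobounded ℂ] (fun z => z ^ d) := by
    have hO := (isBigO_cobounded_of_degree_le (Q := X ^ d)
      ((degree_X_pow (R := ℂ) d).symm ▸ degree_le_of_natDegree_le hp)).norm_left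
    simpa using hO
  obtain ⟨M, hM⟩ := ((hpoly hA).add (hpoly hB)).bound
  refine ⟨max M 1, le_max_right _ _, ?_⟩
  filter_upwards [(tendsto_ofReal_mul_cobounded hw).eventually hM,
    (tendsto_ofReal_mul_cobounded hw).eventually (Bornology.eventually_ne_cobounded 0),
    eventually_ge_atTop (1 / ‖w‖)] with r hMr hz hr
  have hw' : 0 < ‖w‖ := norm_pos_iff.2 hw
  have hr0 : 0 < r := lt_of_lt_of_le (by positivity) hr
  have hnorm : ‖(r : ℂ) * w‖ = r * ‖w‖ := by
    rw [norm_mul, Complex.norm_real, Real.norm_of_nonneg hr0.le]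
  rw [hf _ hz, norm_div, norm_pow, hnorm]
  calc ‖expPoly A B (r * w)‖ / (r * ‖w‖) ^ k
      ≤ ‖expPoly A B (r * w)‖ :=
        div_le_self (norm_nonneg _) (one_le_pow₀ (by rwa [div_le_iff₀ hw'] at hr))
    _ ≤ Real.exp |((r : ℂ) * w).im| * (‖A.eval (r * w)‖ + ‖B.eval (r * w)‖) :=
        norm_expPoly_le A B _
    _ ≤ Real.exp (|w.im| * r) * (max M 1 * (r * ‖w‖) ^ d) := by
        rw [im_ofReal_mul, abs_mul, abs_of_pos hr0, mul_comm r]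
        gcongr
        rw [Real.norm_of_nonneg (by positivity), norm_pow, hnorm] at hMr
        exact hMr.trans (by gcongr; exact le_max_left _ _)

lemma limsup_log_norm_div_le {f : ℂ → ℂ} {A B : ℂ[X]} {k d : ℕ}
    (hf : ∀ z ≠ 0, f z = expPoly A B z / z ^ k) (hA : A.natDegree ≤ d) (hB : B.natDegree ≤ d)
    {w : ℂ} (hw : w ≠ 0) :
    limsup (fun r : ℝ => ((Real.log ‖f (r * w)‖ / r : ℝ) : EReal)) atTop ≤ (|w.im| : ℝ) := by
  obtain ⟨M, hM, hbound⟩ := exists_eventually_norm_le_exp_mul_pow hf hA hB hw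
  have hw' : 0 < ‖w‖ := norm_pos_iff.2 hw
  set ψ : ℝ → ℝ := fun r => |w.im| * r + Real.log M + d * Real.log (r * ‖w‖)
  have hle : ∀ᶠ r : ℝ in atTop, Real.log ‖f (r * w)‖ / r ≤ ψ r / r := by
    filter_upwards [hbound, eventually_ge_atTop (1 / ‖w‖)] with r hfr hr
    have hr0 : 0 < r := lt_of_lt_of_le (by positivity) hr
    have hY : 1 ≤ Real.exp (|w.im| * r) * (M * (r * ‖w‖) ^ d) :=
      one_le_mul_of_one_le_of_one_le (Real.one_le_exp (by positivity))
        (one_le_mul_of_one_le_of_one_le hM (one_le_pow₀ (by rwa [div_le_iff₀ hw'] at hr)))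
    have hlog : Real.log ‖f (r * w)‖ ≤ ψ r := by
      calc Real.log ‖f (r * w)‖ ≤ Real.log (Real.exp (|w.im| * r) * (M * (r * ‖w‖) ^ d)) := by
            rcases (norm_nonneg (f (r * w))).eq_or_lt with h | h
            · rw [← h, Real.log_zero]
              exact Real.log_nonneg hY
            · exact Real.log_le_log h hfr
        _ = ψ r := by
          rw [Real.log_mul (by positivity) (by positivity), Real.log_mul (by positivity)
            (by positivity), Real.log_exp, Real.log_pow]
          ring
    exact div_le_div_of_nonneg_right hlog hr0.le
  have hψ : Tendsto (fun r => ψ r / r) atTop (𝓝 |w.im|) := by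
    refine tendsto_div_of_tendsto_sub_mul_add_mul_log le_rfl (m := -d) (tendsto_const_nhds
      (x := Real.log M + d * Real.log ‖w‖) |>.congr' ?_)
    filter_upwards [eventually_gt_atTop 0] with r hr
    simp only [ψ]
    rw [Real.log_mul hr.ne' hw'.ne']
    ring
  calc limsup (fun r : ℝ => ((Real.log ‖f (r * w)‖ / r : ℝ) : EReal)) atTop
      ≤ limsup (fun r : ℝ => ((ψ r / r : ℝ) : EReal)) atTop :=
        limsup_le_limsup (hle.mono fun r h => EReal.coe_le_coe h)
    _ = (|w.im| : ℝ) := (EReal.tendsto_coe.2 hψ).limsup_eq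

lemma tendsto_log_norm_div_of_im_pos {f : ℂ → ℂ} {A B : ℂ[X]} {k d : ℕ}
    (hf : ∀ z ≠ 0, f z = expPoly A B z / z ^ k) (hA : A.natDegree ≤ d) (hB : B.degree = d)
    {w : ℂ} (him : 0 < w.im) :
    Tendsto (fun r : ℝ => Real.log ‖f (r * w)‖ / r) atTop (𝓝 w.im) := by
  have hu : Tendsto (fun r : ℝ => cexp (2 * I * (r * w))) atTop (𝓝 0) := by
    have hre (r : ℝ) : (2 * I * (r * w)).re = -(2 * w.im) * r := by
      simp only [mul_re, re_ofNat, I_re, im_ofNat, I_im, ofReal_re, ofReal_im, mul_im]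
      ring
    rw [tendsto_zero_iff_norm_tendsto_zero]
    simp_rw [Complex.norm_exp, hre]
    exact Real.tendsto_exp_atBot.comp (tendsto_id.const_mul_atTop_of_neg (by linarith))
  have hw : w ≠ 0 := fun h => by simp [h] at him
  exact tendsto_log_norm_div_of_tendsto_exp hf hA (natDegree_le_of_degree_le hB.le) le_rfl hw hu
    (by simpa using coeff_ne_zero_of_eq_degree hB)

lemma limsup_log_norm_div_ofReal {f : ℂ → ℂ} {A B : ℂ[X]} {k d : ℕ}
    (hf : ∀ z ≠ 0, f z = expPoly A B z / z ^ k) (hA : A.degree = d) (hB : B.natDegree ≤ d)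
    {c : ℝ} (hc : 0 < c) :
    limsup (fun r : ℝ => ((Real.log ‖f (r * c)‖ / r : ℝ) : EReal)) atTop = 0 := by
  have hAd : A.natDegree ≤ d := natDegree_le_of_degree_le hA.le
  have hc' : (c : ℂ) ≠ 0 := by exact_mod_cast hc.ne'
  refine le_antisymm (by simpa using limsup_log_norm_div_le hf hAd hB hc') ?_
  obtain ⟨x₀, hx₀⟩ : ∃ x₀ : ℝ, cexp (2 * I * x₀) * A.coeff d + B.coeff d ≠ 0 := by
    by_cases h : A.coeff d + B.coeff d = 0
    · refine ⟨π / 2, fun h' => coeff_ne_zero_of_eq_degree hA ?_⟩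
      have hπ : cexp (2 * I * (π / 2 : ℝ)) = -1 := by
        push_cast
        rw [show 2 * I * (π / 2) = π * I by ring, exp_pi_mul_I]
      rw [hπ] at h'
      linear_combination (h - h') / 2
    · exact ⟨0, by simpa using h⟩
  set l := map (fun n : ℕ => (x₀ + n * π) / c) atTop
  have hl : l ≤ atTop := (tendsto_atTop_add_const_left _ x₀
    (tendsto_natCast_atTop_atTop.atTop_mul_const Real.pi_pos)).atTop_div_const hc
  have hu : Tendsto (fun r : ℝ => cexp (2 * I * (r * c))) l (𝓝 (cexp (2 * I * x₀))) := by
    refine tendsto_map'_iff.2 (tendsto_const_nhds.congr fun n => ?_)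
    rw [Function.comp_apply, ← Complex.ofReal_mul, div_mul_cancel₀ _ hc.ne']
    push_cast
    rw [show 2 * I * (x₀ + n * π) = 2 * I * x₀ + n * (2 * π * I) by ring, Complex.exp_add,
      Complex.exp_nat_mul, Complex.exp_two_pi_mul_I, one_pow, mul_one]
  calc ((0 : ℝ) : EReal) = limsup (fun r : ℝ => ((Real.log ‖f (r * c)‖ / r : ℝ) : EReal)) l :=
        (EReal.tendsto_coe.2 (tendsto_log_norm_div_of_tendsto_exp hf hAd hB hl hc' hu
          hx₀)).limsup_eq.symm
    _ ≤ limsup (fun r : ℝ => ((Real.log ‖f (r * c)‖ / r : ℝ) : EReal)) atTop :=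
        limsup_le_limsup_of_le hl

lemma ExpPolyForm.limsup_log_norm_div {f : ℂ → ℂ} {k d : ℕ} (hf : ExpPolyForm f k d) {w : ℂ}
    (hw : w ≠ 0) :
    limsup (fun r : ℝ => ((Real.log ‖f (r * w)‖ / r : ℝ) : EReal)) atTop = (|w.im| : ℝ) := by
  wlog hhalf : 0 < w.im ∨ (w.im = 0 ∧ 0 < w.re) generalizing f w
  · have hneg : 0 < (-w).im ∨ ((-w).im = 0 ∧ 0 < (-w).re) := by
      simp only [neg_im, neg_re, neg_pos, neg_eq_zero]
      rcases lt_trichotomy w.im 0 with h | h | h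
      · exact Or.inl h
      · exact Or.inr ⟨h, (not_lt.1 fun h' => hhalf (Or.inr ⟨h, h'⟩)).lt_of_ne
          fun h' => hw (Complex.ext h' h)⟩
      · exact absurd (Or.inl h) hhalf
    simpa [mul_neg] using this hf.comp_neg (neg_ne_zero.2 hw) hneg
  obtain ⟨A, B, hA, hB, hfAB⟩ := hf
  rcases hhalf with him | ⟨him, hre⟩
  · rw [abs_of_pos him]
    exact (EReal.tendsto_coe.2 (tendsto_log_norm_div_of_im_pos hfAB
      (natDegree_le_of_degree_le hA.le) hB him)).limsup_eq
  · obtain ⟨c, rfl⟩ : ∃ c : ℝ, w = c := ⟨w.re, Complex.ext rfl (by simp [him])⟩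
    rw [Complex.ofReal_im, abs_zero]
    exact limsup_log_norm_div_ofReal hfAB hA (natDegree_le_of_degree_le hB.le) (by simpa using hre)

theorem indicator_sphBessel_deriv_general
    (R₀ : ℝ) (hR₀ : 0 < R₀) (l : ℕ) (θ : ℝ) :
    indic (fun k => deriv (sphBessel l) (k * R₀)) θ = ((R₀ * |Real.sin θ| : ℝ) : EReal) := by
  have hw : cexp (θ * I) * R₀ ≠ 0 :=
    mul_ne_zero (Complex.exp_ne_zero _) (by exact_mod_cast hR₀.ne')
  have him : |(cexp (θ * I) * R₀).im| = R₀ * |Real.sin θ| := by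
    rw [Complex.im_mul_ofReal, Complex.exp_ofReal_mul_I_im, abs_mul, abs_of_pos hR₀, mul_comm]
  rw [← him, ← (expPolyForm_sphBessel l).deriv.limsup_log_norm_div hw, indic]
  simp_rw [mul_assoc]

/-- Indicator of the derivative of the spherical Bessel function (Lemma 3.7, second part):
. -/
theorem indicator_sphBessel_deriv
    (R₀ : ℝ) (hR₀ : 0 < R₀) (l : ℕ) (θ : ℝ) (hθ : θ ∈ Set.Icc (0:ℝ) (2 * π)) :
    indic (fun k => deriv (sphBessel l) (k * R₀)) θ = ((R₀ * |Real.sin θ| : ℝ) : EReal) :=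
  indicator_sphBessel_deriv_general R₀ hR₀ l θ
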